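/- Let m ≥ 2 be an integer and r, s integers with 1 ≤ r ≤ m−1, 1 ≤ s ≤ m+1 and r ≡ s (mod 2). Then ((m+2)r − ms)² ≤ (m² − 2)², and consequently h^m_{r,s} ≤ m(m−2)/8. -/

import Mathlib

/-- `h^m_{r,s} = (((m+2)r − ms)² − 4) / (8m(m+2))`. -/
noncomputable def hPQ (m : ℝ) (r s : ℤ) : ℝ :=
  (((m + 2) * (r : ℝ) - m * (s : ℝ)) ^ 2 - 4) / (8 * m * (m + 2))

/-! The quantity `(m+2)r − ms` is largest at `(r, s) = (m−1, 1)` and smallest at `(1, m+1)`,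
where it equals `±(m² − 2)`. Since `h^m_{r,s}` is increasing in its square, the bound on `h` is the
value `h^m_{m−1,1} = m(m−2)/8`. -/

theorem sq_add_two_mul_sub_mul_le (m r s : ℤ) (hm : 0 ≤ m)
    (hr1 : 1 ≤ r) (hr2 : r ≤ m - 1) (hs1 : 1 ≤ s) (hs2 : s ≤ m + 1) :
    ((m + 2) * r - m * s) ^ 2 ≤ (m ^ 2 - 2) ^ 2 :=
  sq_le_sq' (by nlinarith) (by nlinarith)

theorem hPQ_le_hPQ_of_sq_le {m : ℝ} (hm : 0 < m * (m + 2)) {r s r' s' : ℤ}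
    (h : ((m + 2) * r - m * s) ^ 2 ≤ ((m + 2) * r' - m * s') ^ 2) :
    hPQ m r s ≤ hPQ m r' s' := by
  unfold hPQ
  rw [mul_assoc]
  gcongr

theorem hPQ_intCast_sub_one_one (m : ℤ) (hm : (m : ℝ) * (m + 2) ≠ 0) :
    hPQ m (m - 1) 1 = m * (m - 2) / 8 := by
  unfold hPQ
  rw [div_eq_div_iff (by rw [mul_assoc]; exact mul_ne_zero (by norm_num) hm) (by norm_num)]
  push_cast
  ring

theorem h_le_bound_general (m : ℤ) (hm : 2 ≤ m) (r s : ℤ)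
    (hr1 : 1 ≤ r) (hr2 : r ≤ m - 1) (hs1 : 1 ≤ s) (hs2 : s ≤ m + 1) :
    ((m + 2) * r - m * s) ^ 2 ≤ (m ^ 2 - 2) ^ 2 ∧
    hPQ (m : ℝ) r s ≤ (m : ℝ) * ((m : ℝ) - 2) / 8 := by
  have hsq := sq_add_two_mul_sub_mul_le m r s (by omega) hr1 hr2 hs1 hs2
  refine ⟨hsq, ?_⟩
  rw [← hPQ_intCast_sub_one_one m (by positivity)]
  refine hPQ_le_hPQ_of_sq_le (by positivity) ?_
  have hvalue : m ^ 2 - 2 = (m + 2) * (m - 1) - m * 1 := by ring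
  exact_mod_cast hvalue ▸ hsq

/-- For `m ≥ 2`, `1 ≤ r ≤ m−1`, `1 ≤ s ≤ m+1`, `r ≡ s (mod 2)`:
`((m+2)r − ms)² ≤ (m² − 2)²`, hence `h^m_{r,s} ≤ m(m−2)/8`. -/
theorem h_le_bound (m : ℤ) (hm : 2 ≤ m) (r s : ℤ)
    (hr1 : 1 ≤ r) (hr2 : r ≤ m - 1) (hs1 : 1 ≤ s) (hs2 : s ≤ m + 1)
    (hpar : r % 2 = s % 2) :
    ((m + 2) * r - m * s) ^ 2 ≤ (m ^ 2 - 2) ^ 2 ∧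
    hPQ (m : ℝ) r s ≤ (m : ℝ) * ((m : ℝ) - 2) / 8 :=
  h_le_bound_general m hm r s hr1 hr2 hs1 hs2
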